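/- Let 1 ≤ l < n, r ∈ Z_n, η ∈ P^1(k) and s ≥ 1. Then M_s(l,r,η)^* ≅ M_s(n−l, 1−r, −ηq^l). -/

import Mathlib

open scoped TensorProduct
open MulOpposite

noncomputable section

/-- The Drinfeld double `H_n(1,q)` of the Taft algebra `H_n(q)`, presented by generators
`a, b, c, d` and relations, together with its Hopf algebra structure data. -/
structure TaftDouble (k : Type) [Field k] where
  n : ℕ
  hn : 2 < n
  q : k
  hq : IsPrimitiveRoot q n
  H : Type
  [ringH : Ring H]
  [algH : Algebra k H]
  a : H
  b : H
  c : H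
  d : H
  gen : Algebra.adjoin k {a, b, c, d} = ⊤
  finDim : Module.finrank k H = n ^ 4
  rel_ba : b * a = q • (a * b)
  rel_db : d * b = q • (b * d)
  rel_ca : c * a = q • (a * c)
  rel_dc : d * c = q • (c * d)
  rel_bc : b * c = c * b
  rel_an : a ^ n = 0
  rel_bn : b ^ n = 1
  rel_cn : c ^ n = 1
  rel_dn : d ^ n = 0
  rel_da : d * a - q • (a * d) = 1 - b * c
  comul : H →ₐ[k] H ⊗[k] H
  counit : H →ₐ[k] k
  antipode : H →ₐ[k] Hᵐᵒᵖ
  comul_a : comul a = a ⊗ₜ[k] b + 1 ⊗ₜ[k] a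
  comul_b : comul b = b ⊗ₜ[k] b
  comul_c : comul c = c ⊗ₜ[k] c
  comul_d : comul d = d ⊗ₜ[k] c + 1 ⊗ₜ[k] d
  counit_a : counit a = 0
  counit_b : counit b = 1
  counit_c : counit c = 1
  counit_d : counit d = 0
  antipode_a : antipode a = op (-(a * b ^ (n - 1)))
  antipode_b : antipode b = op (b ^ (n - 1))
  antipode_c : antipode c = op (c ^ (n - 1))
  antipode_d : antipode d = op (-(d * c ^ (n - 1)))

variable {k : Type} [Field k]

instance (S : TaftDouble k) : Ring S.H := S.ringH
instance (S : TaftDouble k) : Algebra k S.H := S.algH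

/-- `c(t)`, the integer part of `(t+1)/2`. -/
def cc (t : ℕ) : ℕ := (t + 1) / 2

/-- Extension of a finitely indexed family by zero. -/
def fe {M : Type} [Zero M] {N : ℕ} (v : Fin N → M) (t : ℕ) : M :=
  if h : t < N then v ⟨t, h⟩ else 0

/-- Extension of a doubly indexed family by zero. -/
def fe2 {M : Type} [Zero M] {N1 N2 : ℕ} (v : Fin N1 × Fin N2 → M) (t1 t2 : ℕ) : M :=
  if h : t1 < N1 ∧ t2 < N2 then v (⟨t1, h.1⟩, ⟨t2, h.2⟩) else 0

/-- Rescaling of a point of `P^1(k) = k ∪ {∞}`, with the convention `α · ∞ = ∞`. -/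
def pscale (α : k) (η : WithTop k) : WithTop k := η.map (fun x => α * x)

namespace TaftDouble

variable (S : TaftDouble k)

/-- `q^r` for `r ∈ ℤ_n` (well defined since `q^n = 1`). -/
def qpow (r : ZMod S.n) : k := S.q ^ r.val

/-- The `q`-integer `(i)_q = 1 + q + ⋯ + q^{i-1}`. -/
def qint (i : ℕ) : k := ∑ j ∈ Finset.range i, S.q ^ j

/-- `α_i(l) = (i)_q (1 - q^{i-l})`. -/
def alphaq (i l : ℕ) : k := S.qint i * (1 - S.q ^ ((i : ℤ) - (l : ℤ)))

/-- A bundled finite-dimensional left module over `H_n(1,q)`. -/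
structure SMod where
  carrier : Type
  [acg : AddCommGroup carrier]
  [modH : Module S.H carrier]
  [modk : Module k carrier]
  [tower : IsScalarTower k S.H carrier]

attribute [instance] SMod.acg SMod.modH SMod.modk SMod.tower

variable {S}

/-- Bundle a module. -/
def SMod.mk' (S : TaftDouble k) (T : Type) [AddCommGroup T] [Module S.H T] [Module k T]
    [IsScalarTower k S.H T] : SMod S := ⟨T⟩

/-- The submodule `W` of `X`, viewed as a bundled module. -/
def SMod.sub (X : SMod S) (W : Submodule S.H X.carrier) : SMod S where
  carrier := W

/-- `X` satisfies `IsV l r` iff `X ≅ V(l,r)`, the simple module with standard basis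
`v_1, …, v_l` (here indexed by `Fin l`, shifted by one). -/
def IsV (S : TaftDouble k) (l : ℕ) (r : ZMod S.n) (X : SMod S) : Prop :=
  ∃ v : Module.Basis (Fin l) k X.carrier,
    (∀ i : Fin l, S.a • (v i : X.carrier) = fe v ((i : ℕ) + 1)) ∧
    (∀ i : Fin l, S.d • (v i : X.carrier) = S.alphaq (i : ℕ) l • fe v ((i : ℕ) - 1)) ∧
    (∀ i : Fin l, S.b • (v i : X.carrier) = S.qpow (r + ((i : ℕ) : ZMod S.n)) • v i) ∧
    (∀ i : Fin l, S.c • (v i : X.carrier)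
      = S.qpow (((i : ℕ) : ZMod S.n) + 1 - r - (l : ZMod S.n)) • v i)

/-- `X ≅ P(l,r)` for `1 ≤ l < n`: the projective cover of `V(l,r)`, given by its
standard basis `v_1, …, v_{2n}` (indexed here by `Fin (2n)`, shifted by one). -/
def IsPexp (S : TaftDouble k) (l : ℕ) (r : ZMod S.n) (X : SMod S) : Prop :=
  ∃ v : Module.Basis (Fin (2 * S.n)) k X.carrier,
    (∀ i : Fin (2 * S.n), S.a • (v i : X.carrier) =
      if (i : ℕ) = S.n - 1 then 0 else fe v ((i : ℕ) + 1)) ∧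
    (∀ i : Fin (2 * S.n), S.b • (v i : X.carrier) =
      if (i : ℕ) < S.n then S.qpow (r + ((i : ℕ) : ZMod S.n)) • v i
      else S.qpow (r + (l : ZMod S.n) + ((i : ℕ) : ZMod S.n)) • v i) ∧
    (∀ i : Fin (2 * S.n), S.c • (v i : X.carrier) =
      if (i : ℕ) < S.n then
        S.qpow (((i : ℕ) : ZMod S.n) + 1 - (l : ZMod S.n) - r) • v i
      else S.qpow (((i : ℕ) : ZMod S.n) + 1 - r) • v i) ∧
    (∀ i : Fin (2 * S.n), S.d • (v i : X.carrier) =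
      if (i : ℕ) ≤ l then
        S.q ^ (i : ℕ) • fe v (2 * S.n - l - 1 + (i : ℕ))
          + S.alphaq (i : ℕ) l • fe v ((i : ℕ) - 1)
      else if (i : ℕ) ≤ S.n then
        S.alphaq ((i : ℕ) - l) (S.n - l) • fe v ((i : ℕ) - 1)
      else if (i : ℕ) ≤ 2 * S.n - l then
        S.alphaq ((i : ℕ) - S.n) (S.n - l) • fe v ((i : ℕ) - 1)
      else S.alphaq ((i : ℕ) + l - 2 * S.n) l • fe v ((i : ℕ) - 1))

/-- `X ≅ P(l,r)`, with the convention `P(n,r) = V(n,r)`. -/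
def IsP (S : TaftDouble k) (l : ℕ) (r : ZMod S.n) (X : SMod S) : Prop :=
  if l = S.n then S.IsV S.n r X else S.IsPexp l r X

/-- `X ≅ M_s(l,r,η)` for `η ∈ k`: the band module, via its standard basis
`v_{i,j}` (`1 ≤ i ≤ n`, `1 ≤ j ≤ s`), indexed here by `Fin n × Fin s` (shifted by one). -/
def IsBandFin (S : TaftDouble k) (s l : ℕ) (r : ZMod S.n) (η : k) (X : SMod S) : Prop :=
  ∃ v : Module.Basis (Fin S.n × Fin s) k X.carrier,
    (∀ p : Fin S.n × Fin s, S.a • (v p : X.carrier) = fe2 v ((p.1 : ℕ) + 1) (p.2 : ℕ)) ∧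
    (∀ p : Fin S.n × Fin s, S.d • (v p : X.carrier) =
      if (p.1 : ℕ) = 0 then
        (if (p.2 : ℕ) = 0 then 0 else fe2 v (S.n - 1) ((p.2 : ℕ) - 1))
          + (η * S.q ^ l) • fe2 v (S.n - 1) (p.2 : ℕ)
      else if (p.1 : ℕ) ≤ S.n - l then
        S.alphaq (p.1 : ℕ) (S.n - l) • fe2 v ((p.1 : ℕ) - 1) (p.2 : ℕ)
      else S.alphaq ((p.1 : ℕ) + l - S.n) l • fe2 v ((p.1 : ℕ) - 1) (p.2 : ℕ)) ∧
    (∀ p : Fin S.n × Fin s, S.b • (v p : X.carrier) =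
      S.qpow (r + (l : ZMod S.n) + ((p.1 : ℕ) : ZMod S.n)) • v p) ∧
    (∀ p : Fin S.n × Fin s, S.c • (v p : X.carrier) =
      S.qpow (((p.1 : ℕ) : ZMod S.n) + 1 - r) • v p)

/-- `X ≅ M_s(l,r,∞)`: the band module with parameter `∞`, via its standard basis. -/
def IsBandInf (S : TaftDouble k) (s l : ℕ) (r : ZMod S.n) (X : SMod S) : Prop :=
  ∃ v : Module.Basis (Fin S.n × Fin s) k X.carrier,
    (∀ p : Fin S.n × Fin s, S.a • (v p : X.carrier) =
      if (p.1 : ℕ) = S.n - l - 1 then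
        (if (p.2 : ℕ) = 0 then 0 else fe2 v ((p.1 : ℕ) + 1) ((p.2 : ℕ) - 1))
      else fe2 v ((p.1 : ℕ) + 1) (p.2 : ℕ)) ∧
    (∀ p : Fin S.n × Fin s, S.d • (v p : X.carrier) =
      if (p.1 : ℕ) = 0 then fe2 v (S.n - 1) (p.2 : ℕ)
      else if (p.1 : ℕ) ≤ S.n - l then
        S.alphaq (p.1 : ℕ) (S.n - l) • fe2 v ((p.1 : ℕ) - 1) (p.2 : ℕ)
      else S.alphaq ((p.1 : ℕ) + l - S.n) l • fe2 v ((p.1 : ℕ) - 1) (p.2 : ℕ)) ∧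
    (∀ p : Fin S.n × Fin s, S.b • (v p : X.carrier) =
      S.qpow (r + (l : ZMod S.n) + ((p.1 : ℕ) : ZMod S.n)) • v p) ∧
    (∀ p : Fin S.n × Fin s, S.c • (v p : X.carrier) =
      S.qpow (((p.1 : ℕ) : ZMod S.n) + 1 - r) • v p)

/-- `X ≅ M_s(l,r,η)` for `η ∈ P^1(k) = k ∪ {∞}`. -/
def IsBand (S : TaftDouble k) (s l : ℕ) (r : ZMod S.n) (η : WithTop k) (X : SMod S) : Prop :=
  WithTop.recTopCoe (S.IsBandInf s l r X) (fun x => S.IsBandFin s l r x X) η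

/-- `X` is an internal direct sum of `c` copies of `P(l,r)`. -/
def IsProjSum (S : TaftDouble k) (c : ℕ) (l : ℕ) (r : ZMod S.n) (X : SMod S) : Prop :=
  ∃ W : Fin c → Submodule S.H X.carrier,
    DirectSum.IsInternal W ∧ ∀ i, S.IsP l r (X.sub (W i))

/-- `X ≅ Ω^m V(l,r)` for `m ≥ 0`: defined recursively, `Ω^{m+1} V(l,r)` being the kernel of
the projective cover `(m+1)P(…) → Ω^m V(l,r)` from the minimal projective resolution. -/
def IsOmPos (S : TaftDouble k) : ℕ → ℕ → ZMod S.n → SMod S → Prop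
  | 0, l, r, X => S.IsV l r X
  | m + 1, l, r, X =>
    ∃ X' Q : SMod S,
      S.IsOmPos m l r X' ∧
      S.IsProjSum (m + 1) (if m % 2 = 0 then l else S.n - l)
        (if m % 2 = 0 then r else r + (l : ZMod S.n)) Q ∧
      ∃ f : Q.carrier →ₗ[S.H] X'.carrier,
        Function.Surjective f ∧
        (∀ N : Submodule S.H Q.carrier, N ⊔ LinearMap.ker f = ⊤ → N = ⊤) ∧
        Nonempty (X.carrier ≃ₗ[S.H] LinearMap.ker f)

/-- `X ≅ Ω^{-m} V(l,r)` for `m ≥ 0`: defined recursively, `Ω^{-(m+1)} V(l,r)` being the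
cokernel of the injective envelope `Ω^{-m} V(l,r) → (m+1)P(…)` from the minimal injective
resolution. -/
def IsOmNeg (S : TaftDouble k) : ℕ → ℕ → ZMod S.n → SMod S → Prop
  | 0, l, r, X => S.IsV l r X
  | m + 1, l, r, X =>
    ∃ X' Q : SMod S,
      S.IsOmNeg m l r X' ∧
      S.IsProjSum (m + 1) (if m % 2 = 0 then l else S.n - l)
        (if m % 2 = 0 then r else r + (l : ZMod S.n)) Q ∧
      ∃ f : X'.carrier →ₗ[S.H] Q.carrier,
        Function.Injective f ∧
        (∀ N : Submodule S.H Q.carrier, N ⊓ LinearMap.range f = ⊥ → N = ⊥) ∧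
        Nonempty (X.carrier ≃ₗ[S.H] (Q.carrier ⧸ LinearMap.range f))

/-- `X ≅ Ω^m V(l,r)` for `m ∈ ℤ`. -/
def IsOm (S : TaftDouble k) (m : ℤ) (l : ℕ) (r : ZMod S.n) (X : SMod S) : Prop :=
  if 0 ≤ m then S.IsOmPos m.toNat l r X else S.IsOmNeg (-m).toNat l r X

/-- Descriptions of the indecomposable modules over `H_n(1,q)`:
simples `V(l,r)`, projectives `P(l,r)`, string modules `Ω^m V(l,r)`,
and band modules `M_s(l,r,η)`. -/
inductive Desc (S : TaftDouble k) where
  | V (l : ℕ) (r : ZMod S.n)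
  | P (l : ℕ) (r : ZMod S.n)
  | Om (m : ℤ) (l : ℕ) (r : ZMod S.n)
  | B (s l : ℕ) (r : ZMod S.n) (η : WithTop k)

/-- `X` is (isomorphic to) the indecomposable module described by `D`. -/
def Matches (S : TaftDouble k) (D : Desc S) (X : SMod S) : Prop :=
  match D with
  | Desc.V l r => S.IsV l r X
  | Desc.P l r => S.IsP l r X
  | Desc.Om m l r => S.IsOm m l r X
  | Desc.B s l r η => S.IsBand s l r η X

/-- `X` decomposes as the direct sum of the indecomposable modules described by
the family `D`. -/
def DecompAs (S : TaftDouble k) (X : SMod S) {ι : Type} (D : ι → Desc S) : Prop :=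
  ∃ W : ι → Submodule S.H X.carrier,
    (letI := Classical.decEq ι; DirectSum.IsInternal W) ∧
    ∀ i, S.Matches (D i) (X.sub (W i))

/-- The representation of `H_n(1,q)` on a module. -/
def rep (X : SMod S) : S.H →ₐ[k] Module.End k X.carrier :=
  Algebra.lsmul k k X.carrier

/-- The representation of `H_n(1,q)` on the tensor product of two modules, via the
comultiplication. -/
def tensRep (X Y : SMod S) : S.H →ₐ[k] Module.End k (X.carrier ⊗[k] Y.carrier) :=
  (Module.endTensorEndAlgHom (R := k) (S := k) (A := k)
      (M := X.carrier) (N := Y.carrier)).comp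
    ((Algebra.TensorProduct.map (rep X) (rep Y)).comp S.comul)

/-- The carrier of the tensor product of two modules. -/
def TensC (X Y : SMod S) : Type := X.carrier ⊗[k] Y.carrier

instance (X Y : SMod S) : AddCommGroup (TensC X Y) :=
  inferInstanceAs (AddCommGroup (X.carrier ⊗[k] Y.carrier))

instance (X Y : SMod S) : Module k (TensC X Y) :=
  inferInstanceAs (Module k (X.carrier ⊗[k] Y.carrier))

/-- The `H_n(1,q)`-module structure on the tensor product `X ⊗_k Y`, via the
comultiplication. -/
instance (X Y : SMod S) : Module S.H (TensC X Y) :=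
  letI : Module (Module.End k (X.carrier ⊗[k] Y.carrier)) (TensC X Y) :=
    inferInstanceAs (Module (Module.End k (X.carrier ⊗[k] Y.carrier))
      (X.carrier ⊗[k] Y.carrier))
  Module.compHom (TensC X Y) (tensRep X Y).toRingHom

instance (X Y : SMod S) : IsScalarTower k S.H (TensC X Y) :=
  ⟨fun r h m => LinearMap.congr_fun (map_smul (tensRep X Y) r h) m⟩

/-- The tensor product of two modules over `H_n(1,q)`, with action induced by the
comultiplication. -/
def SMod.tens (X Y : SMod S) : SMod S := ⟨TensC X Y⟩

/-- The representation of `H_n(1,q)` on the dual of a module, via the antipode. -/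
def dualRep (X : SMod S) : S.H →ₐ[k] Module.End k (Module.Dual k X.carrier) where
  toFun h := ((rep X) (unop (S.antipode h))).dualMap
  map_one' := by
    ext φ x
    simp
  map_mul' h₁ h₂ := by
    ext φ x
    simp [map_mul, Module.End.mul_apply, unop_mul]
  map_zero' := by
    ext φ x
    simp
  map_add' h₁ h₂ := by
    ext φ x
    simp [map_add, unop_add]
  commutes' r := by
    ext φ x
    simp [AlgHom.commutes, Module.algebraMap_end_apply]

/-- The carrier of the dual module. -/
def DualC (X : SMod S) : Type := Module.Dual k X.carrier

instance (X : SMod S) : AddCommGroup (DualC X) :=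
  inferInstanceAs (AddCommGroup (Module.Dual k X.carrier))

instance (X : SMod S) : Module k (DualC X) :=
  inferInstanceAs (Module k (Module.Dual k X.carrier))

/-- The `H_n(1,q)`-module structure on the dual `X^*`, with the action
`(h·f)(m) = f(S(h)·m)`. -/
instance (X : SMod S) : Module S.H (DualC X) :=
  letI : Module (Module.End k (Module.Dual k X.carrier)) (DualC X) :=
    inferInstanceAs (Module (Module.End k (Module.Dual k X.carrier))
      (Module.Dual k X.carrier))
  Module.compHom (DualC X) (dualRep X).toRingHom

instance (X : SMod S) : IsScalarTower k S.H (DualC X) :=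
  ⟨fun r h m => LinearMap.congr_fun (map_smul (dualRep X) r h) m⟩

/-- The dual module `X^* = Hom_k(X,k)` with the action `(h·f)(m) = f(S(h)·m)`. -/
def SMod.dual (X : SMod S) : SMod S := ⟨DualC X⟩

end TaftDouble

open TaftDouble

/-!
Dualising reverses the standard basis `v_{i,j}` of `M_s(l,r,η)`: since `S(b) = b^{n-1}`,
`S(c) = c^{n-1}`, `S(a) = -a b^{n-1}` and `S(d) = -d c^{n-1}`, on the reversed dual basis
`v^*_{n-1-i,s-1-j}` the elements `b` and `c` act with the inverse weights, which are those of
`M_s(n-l, 1-r, ·)`, while `a` and `d` act by their transposes twisted by these weights. Rescaling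
the reversed dual basis absorbs the twists. Along `i` the rescaling is a product of `b`-weights,
and it closes up around the band because `q^(n choose 2) = (-1)^(n-1)`; along `j` it is a power
of `-q^l` (for `η ∈ k`, which turns the parameter into `-ηq^l`) or of `-q^(-l)` (for `η = ∞`).
The remaining `d`-relations reduce to `q^(2i-l) α_{l-i}(l) = α_i(l)` and its analogue for `n-l`.
-/

theorem IsPrimitiveRoot.pow_choose_two {R : Type*} [CommRing R] [IsDomain R] {ζ : R} {n : ℕ}
    (hζ : IsPrimitiveRoot ζ n) : ζ ^ n.choose 2 = (-1) ^ (n - 1) := by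
  rw [Nat.choose_two_right]
  rcases Nat.even_or_odd' n with ⟨m, rfl | rfl⟩
  · rcases m.eq_zero_or_pos with rfl | hm
    · simp
    have hζm : ζ ^ m = -1 := by
      have := hζ.pow_of_dvd hm.ne' (dvd_mul_left m 2)
      rw [Nat.mul_div_cancel _ hm] at this
      exact this.eq_neg_one_of_two_right
    rw [show 2 * m * (2 * m - 1) / 2 = m * (2 * m - 1) by
      rw [mul_assoc, Nat.mul_div_cancel_left _ two_pos], pow_mul, hζm]
  · rw [show (2 * m + 1) * (2 * m + 1 - 1) / 2 = (2 * m + 1) * m by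
      rw [Nat.add_sub_cancel, mul_left_comm, Nat.mul_div_cancel_left _ two_pos],
      pow_mul, hζ.pow_eq_one, one_pow, Nat.add_sub_cancel, pow_mul]
    simp

theorem pow_smul_of_smul_eq {R A M : Type*} [CommSemiring R] [Semiring A] [Algebra R A]
    [AddCommMonoid M] [Module A M] [Module R M] [IsScalarTower R A M] {g : A} {c : R} {m : M}
    (h : g • m = c • m) (t : ℕ) : g ^ t • m = c ^ t • m := by
  induction t with
  | zero => simp
  | succ t ih => rw [pow_succ, pow_succ, mul_smul, h, smul_comm, ih, mul_comm, mul_smul]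

theorem ZMod.natCast_eq_neg_of_add_eq {n i j : ℕ} (h : i + j = n) : (i : ZMod n) = -j := by
  rw [eq_neg_iff_add_eq_zero, ← Nat.cast_add, h, ZMod.natCast_self]

namespace TaftDouble

variable (S : TaftDouble k)

instance : NeZero S.n := ⟨by have := S.hn; omega⟩

lemma q_pow_n : S.q ^ S.n = 1 := S.hq.pow_eq_one

lemma q_ne_zero : S.q ≠ 0 := S.hq.ne_zero (NeZero.ne _)

lemma q_ne_one : S.q ≠ 1 := S.hq.ne_one (by have := S.hn; omega)

lemma qpow_natCast (m : ℕ) : S.qpow m = S.q ^ m := by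
  rw [qpow, ZMod.val_natCast, S.hq.eq_orderOf, pow_mod_orderOf]

lemma qpow_zero : S.qpow 0 = 1 := by
  simpa using S.qpow_natCast 0

lemma qpow_add (x y : ZMod S.n) : S.qpow (x + y) = S.qpow x * S.qpow y := by
  rw [← ZMod.natCast_zmod_val x, ← ZMod.natCast_zmod_val y, ← Nat.cast_add, qpow_natCast,
    qpow_natCast, qpow_natCast, pow_add]

lemma qpow_ne_zero (z : ZMod S.n) : S.qpow z ≠ 0 := pow_ne_zero _ S.q_ne_zero

lemma qpow_neg (z : ZMod S.n) : S.qpow (-z) = (S.qpow z)⁻¹ := by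
  refine eq_inv_of_mul_eq_one_left ?_
  rw [← qpow_add, neg_add_cancel, qpow_zero]

lemma qpow_intCast (m : ℤ) : S.qpow m = S.q ^ m := by
  cases m with
  | ofNat m => simpa using S.qpow_natCast m
  | negSucc m =>
    rw [Int.cast_negSucc, qpow_neg, zpow_negSucc, qpow_natCast]

lemma qpow_pow_n_sub_one (z : ZMod S.n) : S.qpow z ^ (S.n - 1) = S.qpow (-z) := by
  rw [qpow, ← pow_mul, ← qpow_natCast, Nat.cast_mul, ZMod.natCast_zmod_val,
    Nat.cast_sub NeZero.one_le, ZMod.natCast_self]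
  ring_nf

lemma alphaq_self (m : ℕ) : S.alphaq m m = 0 := by
  simp [alphaq]

lemma q_sub_one_mul_alphaq (i l : ℕ) :
    (S.q - 1) * S.alphaq i l = (S.q ^ i - 1) * (1 - S.q ^ ((i : ℤ) - l)) := by
  rw [alphaq, qint, ← mul_assoc, mul_geom_sum]

lemma qpow_mul_alphaq_sub {i l : ℕ} (hil : i ≤ l) :
    S.qpow (2 * i - l) * S.alphaq (l - i) l = S.alphaq i l := by
  have hq := S.q_ne_zero
  refine mul_left_cancel₀ (sub_ne_zero.mpr S.q_ne_one) ?_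
  rw [mul_left_comm, q_sub_one_mul_alphaq, q_sub_one_mul_alphaq,
    show (2 * i - l : ZMod S.n) = ((2 * i - l : ℤ) : ZMod S.n) by push_cast; ring, qpow_intCast,
    Nat.cast_sub hil, ← zpow_natCast, ← zpow_natCast, Nat.cast_sub hil]
  simp only [zpow_sub₀ hq, zpow_add₀ hq, two_mul]
  field_simp

lemma qpow_mul_alphaq_n_sub {i l : ℕ} (hli : l ≤ i) (hin : i ≤ S.n) :
    S.qpow (2 * i - l) * S.alphaq (S.n - i) (S.n - l) = S.alphaq (i - l) (S.n - l) := by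
  have hq := S.q_ne_zero
  have hqn : S.q ^ (S.n : ℤ) = 1 := by rw [zpow_natCast, S.q_pow_n]
  refine mul_left_cancel₀ (sub_ne_zero.mpr S.q_ne_one) ?_
  rw [mul_left_comm, q_sub_one_mul_alphaq, q_sub_one_mul_alphaq,
    show (2 * i - l : ZMod S.n) = ((2 * i - l : ℤ) : ZMod S.n) by push_cast; ring, qpow_intCast,
    ← zpow_natCast, ← zpow_natCast, Nat.cast_sub hin, Nat.cast_sub (hli.trans hin),
    Nat.cast_sub hli]
  simp only [zpow_sub₀ hq, zpow_add₀ hq, two_mul, hqn]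
  field_simp

/-- The rescaling of the reversed dual basis along `i`: with `z = r + l`, the ratio
`-q^(i + 2 - z)` is the inverse `b`-weight of `v_{n-2-i}` (negated since `S(a) = -a b^{n-1}`),
which makes `a` map the `i`-th dual basis vector to the `(i+1)`-th. -/
def ladder (z : ZMod S.n) (i : ℕ) : k := ∏ t ∈ Finset.range i, -S.qpow (t + 2 - z)

lemma ladder_zero (z : ZMod S.n) : S.ladder z 0 = 1 := Finset.prod_range_zero _

lemma ladder_succ (z : ZMod S.n) (i : ℕ) :
    S.ladder z (i + 1) = S.ladder z i * -S.qpow (i + 2 - z) := Finset.prod_range_succ _ _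

lemma ladder_ne_zero (z : ZMod S.n) (i : ℕ) : S.ladder z i ≠ 0 :=
  Finset.prod_ne_zero_iff.mpr fun _ _ => neg_ne_zero.mpr (S.qpow_ne_zero _)

lemma ladder_n_sub_one (z : ZMod S.n) : S.ladder z (S.n - 1) = S.qpow (z - 1) := by
  have hsplit : ∀ t : ℕ, -S.qpow (t + 2 - z) = (-1) * S.q ^ (t + 1) * S.qpow (1 - z) := by
    intro t
    rw [← qpow_natCast, mul_assoc, ← qpow_add]
    push_cast
    ring_nf
  have hsum : ∑ t ∈ Finset.range (S.n - 1), (t + 1) = S.n.choose 2 := by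
    have := Finset.sum_range_succ' (fun t => t) (S.n - 1)
    rw [Nat.sub_add_cancel NeZero.one_le, Finset.sum_range_id, ← Nat.choose_two_right] at this
    omega
  rw [ladder, Finset.prod_congr rfl fun t _ => hsplit t, Finset.prod_mul_distrib,
    Finset.prod_mul_distrib, Finset.prod_const, Finset.prod_const, Finset.card_range,
    Finset.prod_pow_eq_pow_sum, hsum, S.hq.pow_choose_two, ← mul_pow, neg_one_mul, neg_neg,
    one_pow, one_mul, qpow_pow_n_sub_one, neg_sub]

variable {S}

def SMod.dualEquiv (X : SMod S) : X.dual.carrier ≃ₗ[k] Module.Dual k X.carrier :=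
  LinearEquiv.refl k _

lemma SMod.dualEquiv_smul (X : SMod S) (h : S.H) (φ : X.dual.carrier) (m : X.carrier) :
    X.dualEquiv (h • φ) m = X.dualEquiv φ (unop (S.antipode h) • m) := rfl

lemma SMod.dual_ext {X : SMod S} {ι : Type} (v : Module.Basis ι k X.carrier)
    {φ ψ : X.dual.carrier} (h : ∀ i, X.dualEquiv φ (v i) = X.dualEquiv ψ (v i)) : φ = ψ :=
  X.dualEquiv.injective (v.ext h)

section DualAction

variable {X : SMod S} {m : X.carrier} {z : ZMod S.n}

lemma dualEquiv_b_smul (hm : S.b • m = S.qpow z • m) (φ : X.dual.carrier) :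
    X.dualEquiv (S.b • φ) m = S.qpow (-z) * X.dualEquiv φ m := by
  rw [X.dualEquiv_smul, S.antipode_b, unop_op, pow_smul_of_smul_eq hm, qpow_pow_n_sub_one,
    map_smul, smul_eq_mul]

lemma dualEquiv_c_smul (hm : S.c • m = S.qpow z • m) (φ : X.dual.carrier) :
    X.dualEquiv (S.c • φ) m = S.qpow (-z) * X.dualEquiv φ m := by
  rw [X.dualEquiv_smul, S.antipode_c, unop_op, pow_smul_of_smul_eq hm, qpow_pow_n_sub_one,
    map_smul, smul_eq_mul]

lemma dualEquiv_a_smul (hm : S.b • m = S.qpow z • m) (φ : X.dual.carrier) :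
    X.dualEquiv (S.a • φ) m = -(S.qpow (-z) * X.dualEquiv φ (S.a • m)) := by
  rw [X.dualEquiv_smul, S.antipode_a, unop_op, neg_smul, map_neg, mul_smul,
    pow_smul_of_smul_eq hm, qpow_pow_n_sub_one, smul_comm, map_smul, smul_eq_mul]

lemma dualEquiv_d_smul (hm : S.c • m = S.qpow z • m) (φ : X.dual.carrier) :
    X.dualEquiv (S.d • φ) m = -(S.qpow (-z) * X.dualEquiv φ (S.d • m)) := by
  rw [X.dualEquiv_smul, S.antipode_d, unop_op, neg_smul, map_neg, mul_smul,
    pow_smul_of_smul_eq hm, qpow_pow_n_sub_one, smul_comm, map_smul, smul_eq_mul]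

end DualAction

section RevDualBasis

variable {X : SMod S} {N s : ℕ} (v : Module.Basis (Fin N × Fin s) k X.carrier)
  (μ : ℕ → ℕ → k) (hμ : ∀ i j, μ i j ≠ 0)

/-- The basis `w_{i,j} = μ i j • v^*_{N-1-i, s-1-j}` of `X^*`. -/
def revDualBasis : Module.Basis (Fin N × Fin s) k X.dual.carrier :=
  ((v.dualBasis.reindex (Fin.revPerm.prodCongr Fin.revPerm)).isUnitSMul
    fun p => (hμ p.1 p.2).isUnit).map X.dualEquiv.symm

lemma dualEquiv_revDualBasis (p b : Fin N × Fin s) :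
    X.dualEquiv (revDualBasis v μ hμ p) (v b) =
      if (b.1 : ℕ) + p.1 + 1 = N ∧ (b.2 : ℕ) + p.2 + 1 = s then μ p.1 p.2 else 0 := by
  rw [revDualBasis, Module.Basis.map_apply, LinearEquiv.apply_symm_apply,
    Module.Basis.isUnitSMul_apply, Module.Basis.reindex_apply, LinearMap.smul_apply,
    Module.Basis.dualBasis_apply_self]
  have hiff : b = (Fin.revPerm.prodCongr Fin.revPerm).symm p ↔
      (b.1 : ℕ) + p.1 + 1 = N ∧ (b.2 : ℕ) + p.2 + 1 = s := by
    simp only [Equiv.prodCongr_symm, Equiv.prodCongr_apply, Prod.ext_iff, Fin.ext_iff,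
      Fin.revPerm_symm, Prod.map_fst, Prod.map_snd, Fin.revPerm_apply, Fin.val_rev]
    omega
  simp only [hiff, smul_eq_mul, mul_ite, mul_one, mul_zero]

lemma dualEquiv_revDualBasis_fe2 (p : Fin N × Fin s) (t₁ t₂ : ℕ) :
    X.dualEquiv (revDualBasis v μ hμ p) (fe2 v t₁ t₂) =
      if t₁ + p.1 + 1 = N ∧ t₂ + p.2 + 1 = s then μ p.1 p.2 else 0 := by
  by_cases h : t₁ < N ∧ t₂ < s
  · rw [fe2, dif_pos h, dualEquiv_revDualBasis]
  · rw [fe2, dif_neg h, map_zero, if_neg (by omega)]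

lemma dualEquiv_fe2_revDualBasis (t₁ t₂ : ℕ) (b : Fin N × Fin s) :
    X.dualEquiv (fe2 (revDualBasis v μ hμ) t₁ t₂) (v b) =
      if (b.1 : ℕ) + t₁ + 1 = N ∧ (b.2 : ℕ) + t₂ + 1 = s then μ t₁ t₂ else 0 := by
  by_cases h : t₁ < N ∧ t₂ < s
  · rw [fe2, dif_pos h, dualEquiv_revDualBasis]
  · rw [fe2, dif_neg h, map_zero, LinearMap.zero_apply, if_neg (by omega)]

end RevDualBasis

section BandDual

variable {X : SMod S} {s l : ℕ} {r : ZMod S.n} {v : Module.Basis (Fin S.n × Fin s) k X.carrier}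
  {μ : ℕ → ℕ → k} {hμ : ∀ i j, μ i j ≠ 0}

lemma b_smul_revDualBasis (hln : l ≤ S.n)
    (hb : ∀ p : Fin S.n × Fin s, S.b • v p = S.qpow (r + l + (p.1 : ℕ)) • v p)
    (p : Fin S.n × Fin s) :
    S.b • revDualBasis v μ hμ p =
      S.qpow (1 - r + (S.n - l : ℕ) + (p.1 : ℕ)) • revDualBasis v μ hμ p := by
  refine SMod.dual_ext v fun b => ?_
  rw [dualEquiv_b_smul (hb b), map_smul, LinearMap.smul_apply, smul_eq_mul,
    dualEquiv_revDualBasis]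
  split_ifs with h
  · rw [ZMod.natCast_eq_neg_of_add_eq (i := b.1) (j := p.1 + 1) (by omega),
      ZMod.natCast_eq_neg_of_add_eq (i := S.n - l) (j := l) (by omega)]
    push_cast
    ring_nf
  · rw [mul_zero, mul_zero]

lemma c_smul_revDualBasis
    (hc : ∀ p : Fin S.n × Fin s, S.c • v p = S.qpow ((p.1 : ℕ) + 1 - r) • v p)
    (p : Fin S.n × Fin s) :
    S.c • revDualBasis v μ hμ p =
      S.qpow ((p.1 : ℕ) + 1 - (1 - r)) • revDualBasis v μ hμ p := by
  refine SMod.dual_ext v fun b => ?_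
  rw [dualEquiv_c_smul (hc b), map_smul, LinearMap.smul_apply, smul_eq_mul,
    dualEquiv_revDualBasis]
  split_ifs with h
  · rw [ZMod.natCast_eq_neg_of_add_eq (i := b.1) (j := p.1 + 1) (by omega)]
    push_cast
    ring_nf
  · rw [mul_zero, mul_zero]

end BandDual

/- The identities below keep a free index `b` constrained by hypotheses instead of substituting
its value, so that they match goals in which `b` is the coordinate `(b.1 : ℕ)` of a basis index. -/

section Scale

variable (S) (r : ZMod S.n) (l : ℕ)

lemma ladder_succ_of_add_eq {z : ZMod S.n} {b i : ℕ} (hb : b + i + 2 = S.n) :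
    -(S.qpow (-(z + b)) * S.ladder z i) = S.ladder z (i + 1) := by
  rw [ladder_succ, ZMod.natCast_eq_neg_of_add_eq (i := b) (j := i + 2) (by omega)]
  push_cast
  ring_nf

lemma qpow_mul_q_pow_eq_ladder {b : ℕ} (hb : b = 0) :
    S.qpow (-(b + 1 - r)) * S.q ^ l = S.ladder (r + l) (S.n - 1) := by
  rw [ladder_n_sub_one, ← qpow_natCast, ← qpow_add, hb]
  push_cast
  ring_nf

lemma qpow_neg_mul_qpow_eq {b i : ℕ} (hb : b + (i + 1) = S.n) :
    S.qpow (-(b + 1 - r)) * S.qpow (i + 2 - (r + l)) =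
      S.qpow (2 * ((i + 1 : ℕ) : ZMod S.n) - l) := by
  rw [← qpow_add, ZMod.natCast_eq_neg_of_add_eq hb]
  push_cast
  ring_nf

lemma ladder_alphaq_of_lt {b i : ℕ} (hb : b + i = S.n) (hi : 1 ≤ i) (hil : i < l) :
    -(S.qpow (-(b + 1 - r)) * (S.alphaq (b + l - S.n) l * S.ladder (r + l) i)) =
      S.alphaq i l * S.ladder (r + l) (i - 1) := by
  obtain ⟨i, rfl⟩ : ∃ i', i = i' + 1 := ⟨i - 1, by omega⟩
  rw [Nat.add_sub_cancel, ladder_succ, show b + l - S.n = l - (i + 1) by omega,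
    ← S.qpow_mul_alphaq_sub hil.le, ← S.qpow_neg_mul_qpow_eq r l hb]
  ring

lemma ladder_alphaq_of_gt {b i : ℕ} (hb : b + i = S.n) (hli : l < i) :
    -(S.qpow (-(b + 1 - r)) * (S.alphaq b (S.n - l) * S.ladder (r + l) i)) =
      S.alphaq (i - l) (S.n - l) * S.ladder (r + l) (i - 1) := by
  obtain ⟨i, rfl⟩ : ∃ i', i = i' + 1 := ⟨i - 1, by omega⟩
  obtain rfl : b = S.n - (i + 1) := by omega
  rw [Nat.add_sub_cancel, ladder_succ, ← S.qpow_mul_alphaq_n_sub hli.le (by omega),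
    ← S.qpow_neg_mul_qpow_eq r l hb]
  ring

def finDualScale (i j : ℕ) : k := S.ladder (r + l) i * (-S.q ^ l) ^ j

lemma finDualScale_ne_zero (i j : ℕ) : S.finDualScale r l i j ≠ 0 :=
  mul_ne_zero (S.ladder_ne_zero _ _) (pow_ne_zero _ (neg_ne_zero.mpr (pow_ne_zero _ S.q_ne_zero)))

lemma finDualScale_succ {b i j : ℕ} (hb : b + i + 2 = S.n) :
    -(S.qpow (-(r + l + b)) * S.finDualScale r l i j) = S.finDualScale r l (i + 1) j := by
  simp only [finDualScale]
  linear_combination (-S.q ^ l) ^ j * S.ladder_succ_of_add_eq hb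

lemma finDualScale_wrap {b i j : ℕ} (hb : b = 0) (hi : i = 0) (hj : 1 ≤ j) :
    -(S.qpow (-(b + 1 - r)) * S.finDualScale r l i j) = S.finDualScale r l (S.n - 1) (j - 1) := by
  subst hi
  obtain ⟨j, rfl⟩ : ∃ j', j = j' + 1 := ⟨j - 1, by omega⟩
  simp only [finDualScale, ladder_zero, Nat.add_sub_cancel, pow_succ]
  linear_combination (-S.q ^ l) ^ j * S.qpow_mul_q_pow_eq_ladder r l hb

lemma finDualScale_eta {b i j : ℕ} (hln : l ≤ S.n) (hb : b = 0) (hi : i = 0) (x : k) :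
    -(S.qpow (-(b + 1 - r)) * (x * S.q ^ l * S.finDualScale r l i j)) =
      -S.q ^ l * x * S.q ^ (S.n - l) * S.finDualScale r l (S.n - 1) j := by
  subst hi
  have hqn : S.q ^ l * S.q ^ (S.n - l) = 1 := by
    rw [← pow_add, Nat.add_sub_cancel' hln, S.q_pow_n]
  simp only [finDualScale, ladder_zero]
  linear_combination (-(x * (-S.q ^ l) ^ j)) * S.qpow_mul_q_pow_eq_ladder r l hb
    + (x * S.ladder (r + l) (S.n - 1) * (-S.q ^ l) ^ j) * hqn

lemma finDualScale_of_lt {b i j : ℕ} (hb : b + i = S.n) (hi : 1 ≤ i) (hil : i < l) :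
    -(S.qpow (-(b + 1 - r)) * (S.alphaq (b + l - S.n) l * S.finDualScale r l i j)) =
      S.alphaq i l * S.finDualScale r l (i - 1) j := by
  simp only [finDualScale]
  linear_combination (-S.q ^ l) ^ j * S.ladder_alphaq_of_lt r l hb hi hil

lemma finDualScale_of_gt {b i j : ℕ} (hb : b + i = S.n) (hli : l < i) :
    -(S.qpow (-(b + 1 - r)) * (S.alphaq b (S.n - l) * S.finDualScale r l i j)) =
      S.alphaq (i - l) (S.n - l) * S.finDualScale r l (i - 1) j := by
  simp only [finDualScale]
  linear_combination (-S.q ^ l) ^ j * S.ladder_alphaq_of_gt r l hb hli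

end Scale

section BandFinDual

variable {X : SMod S} {s l : ℕ} {r : ZMod S.n} {v : Module.Basis (Fin S.n × Fin s) k X.carrier}
  {hμ : ∀ i j, S.finDualScale r l i j ≠ 0}

lemma a_smul_revDualBasis_fin
    (ha : ∀ p : Fin S.n × Fin s, S.a • v p = fe2 v (p.1 + 1) p.2)
    (hb : ∀ p : Fin S.n × Fin s, S.b • v p = S.qpow (r + l + (p.1 : ℕ)) • v p)
    (p : Fin S.n × Fin s) :
    S.a • revDualBasis v (S.finDualScale r l) hμ p =
      fe2 (revDualBasis v (S.finDualScale r l) hμ) (p.1 + 1) p.2 := by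
  refine SMod.dual_ext v fun b => ?_
  rw [dualEquiv_a_smul (hb b), ha b, dualEquiv_revDualBasis_fe2, dualEquiv_fe2_revDualBasis]
  split_ifs with h₁ h₂ h₂
  · exact S.finDualScale_succ r l (by omega)
  · omega
  · omega
  · ring

lemma d_smul_revDualBasis_fin (hln : l < S.n) (x : k)
    (hd : ∀ p : Fin S.n × Fin s, S.d • v p =
      if (p.1 : ℕ) = 0 then
        (if (p.2 : ℕ) = 0 then 0 else fe2 v (S.n - 1) (p.2 - 1))
          + (x * S.q ^ l) • fe2 v (S.n - 1) p.2
      else if (p.1 : ℕ) ≤ S.n - l then S.alphaq p.1 (S.n - l) • fe2 v (p.1 - 1) p.2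
      else S.alphaq (p.1 + l - S.n) l • fe2 v (p.1 - 1) p.2)
    (hc : ∀ p : Fin S.n × Fin s, S.c • v p = S.qpow ((p.1 : ℕ) + 1 - r) • v p)
    (p : Fin S.n × Fin s) :
    let w := revDualBasis v (S.finDualScale r l) hμ
    S.d • w p =
      if (p.1 : ℕ) = 0 then
        (if (p.2 : ℕ) = 0 then 0 else fe2 w (S.n - 1) (p.2 - 1))
          + (-S.q ^ l * x * S.q ^ (S.n - l)) • fe2 w (S.n - 1) p.2
      else if (p.1 : ℕ) ≤ S.n - (S.n - l) then
        S.alphaq p.1 (S.n - (S.n - l)) • fe2 w (p.1 - 1) p.2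
      else S.alphaq (p.1 + (S.n - l) - S.n) (S.n - l) • fe2 w (p.1 - 1) p.2 := by
  intro w
  refine SMod.dual_ext v fun b => ?_
  have := p.1.isLt
  have := b.1.isLt
  rw [dualEquiv_d_smul (hc b), hd b, Nat.sub_sub_self hln.le,
    show (p.1 : ℕ) + (S.n - l) - S.n = p.1 - l by omega]
  simp only [apply_ite (X.dualEquiv (w p)), apply_ite (fun φ => X.dualEquiv φ (v b)), map_add,
    map_smul, map_zero, LinearMap.add_apply, LinearMap.smul_apply, LinearMap.zero_apply,
    smul_eq_mul, w, dualEquiv_revDualBasis_fe2, dualEquiv_fe2_revDualBasis]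
  split_ifs <;>
    first
      | omega
      | ring1
      | linear_combination S.finDualScale_wrap r l (b := b.1) (i := p.1) (j := p.2) (by omega)
          (by omega) (by omega)
      | linear_combination S.finDualScale_eta r l hln.le (b := b.1) (i := p.1) (j := p.2)
          (by omega) (by omega) x
      | linear_combination S.finDualScale_of_lt r l (b := b.1) (i := p.1) (j := p.2) (by omega)
          (by omega) (by omega)
      | linear_combination S.finDualScale_of_gt r l (b := b.1) (i := p.1) (j := p.2) (by omega)
          (by omega)
      | (rw [show (b.1 : ℕ) = S.n - l by omega, show (p.1 : ℕ) = l by omega, alphaq_self,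
          alphaq_self]; ring)

lemma isBandFin_dual {x : k} (hln : l < S.n) (hX : S.IsBandFin s l r x X) :
    S.IsBandFin s (S.n - l) (1 - r) (-S.q ^ l * x) X.dual := by
  obtain ⟨v, ha, hd, hb, hc⟩ := hX
  exact ⟨revDualBasis v (S.finDualScale r l) (S.finDualScale_ne_zero r l),
    a_smul_revDualBasis_fin ha hb, d_smul_revDualBasis_fin hln x hd hc,
    b_smul_revDualBasis hln.le hb, c_smul_revDualBasis hc⟩

end BandFinDual

section InfScale

variable (S) (r : ZMod S.n) (l : ℕ)

/-- The extra factor for `i ≥ l` absorbs the shift of `j` in `a • v_{n-l-1,j} = v_{n-l,j-1}`. -/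
def infDualScale (i j : ℕ) : k :=
  S.ladder (r + l) i * (-S.qpow (-l)) ^ (if l ≤ i then j + 1 else j)

lemma infDualScale_ne_zero (i j : ℕ) : S.infDualScale r l i j ≠ 0 :=
  mul_ne_zero (S.ladder_ne_zero _ _) (pow_ne_zero _ (neg_ne_zero.mpr (S.qpow_ne_zero _)))

lemma infDualScale_succ {b i j : ℕ} (hb : b + i + 2 = S.n) (hil : i + 1 ≠ l) :
    -(S.qpow (-(r + l + b)) * S.infDualScale r l i j) = S.infDualScale r l (i + 1) j := by
  simp only [infDualScale]
  rw [show (if l ≤ i + 1 then j + 1 else j) = (if l ≤ i then j + 1 else j) by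
    split_ifs <;> omega]
  linear_combination (-S.qpow (-l)) ^ (if l ≤ i then j + 1 else j) * S.ladder_succ_of_add_eq hb

lemma infDualScale_break {b i j : ℕ} (hl : 1 ≤ l) (hln : l < S.n) (hb : b = S.n - l - 1)
    (hi : i = l - 1) (hj : 1 ≤ j) :
    -(S.qpow (-(r + l + b)) * S.infDualScale r l i j) = S.infDualScale r l (i + 1) (j - 1) := by
  simp only [infDualScale]
  rw [if_neg (by omega), if_pos (by omega), Nat.sub_add_cancel hj]
  linear_combination
    (-S.qpow (-l)) ^ j * S.ladder_succ_of_add_eq (z := r + l) (b := b) (i := i) (by omega)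

lemma infDualScale_wrap {b i j : ℕ} (hl : 1 ≤ l) (hln : l < S.n) (hb : b = 0) (hi : i = 0) :
    -(S.qpow (-(b + 1 - r)) * S.infDualScale r l i j) = S.infDualScale r l (S.n - 1) j := by
  subst hi
  have hinv : S.qpow (-l) * S.q ^ l = 1 := by
    rw [← qpow_natCast, ← qpow_add, neg_add_cancel, qpow_zero]
  simp only [infDualScale, ladder_zero]
  rw [if_neg (by omega), if_pos (by omega), pow_succ]
  linear_combination (-(-S.qpow (-l)) ^ j * S.qpow (-l)) * S.qpow_mul_q_pow_eq_ladder r l hb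
    + (S.qpow (-(b + 1 - r)) * (-S.qpow (-l)) ^ j) * hinv

lemma infDualScale_of_lt {b i j : ℕ} (hb : b + i = S.n) (hi : 1 ≤ i) (hil : i < l) :
    -(S.qpow (-(b + 1 - r)) * (S.alphaq (b + l - S.n) l * S.infDualScale r l i j)) =
      S.alphaq i l * S.infDualScale r l (i - 1) j := by
  simp only [infDualScale]
  rw [if_neg (by omega), if_neg (by omega)]
  linear_combination (-S.qpow (-l)) ^ j * S.ladder_alphaq_of_lt r l hb hi hil

lemma infDualScale_of_gt {b i j : ℕ} (hb : b + i = S.n) (hli : l < i) :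
    -(S.qpow (-(b + 1 - r)) * (S.alphaq b (S.n - l) * S.infDualScale r l i j)) =
      S.alphaq (i - l) (S.n - l) * S.infDualScale r l (i - 1) j := by
  simp only [infDualScale]
  rw [if_pos (by omega), if_pos (by omega)]
  linear_combination (-S.qpow (-l)) ^ (j + 1) * S.ladder_alphaq_of_gt r l hb hli

end InfScale

section BandInfDual

variable {X : SMod S} {s l : ℕ} {r : ZMod S.n} {v : Module.Basis (Fin S.n × Fin s) k X.carrier}
  {hμ : ∀ i j, S.infDualScale r l i j ≠ 0}

lemma a_smul_revDualBasis_inf (hl : 1 ≤ l) (hln : l < S.n)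
    (ha : ∀ p : Fin S.n × Fin s, S.a • v p =
      if (p.1 : ℕ) = S.n - l - 1 then (if (p.2 : ℕ) = 0 then 0 else fe2 v (p.1 + 1) (p.2 - 1))
      else fe2 v (p.1 + 1) p.2)
    (hb : ∀ p : Fin S.n × Fin s, S.b • v p = S.qpow (r + l + (p.1 : ℕ)) • v p)
    (p : Fin S.n × Fin s) :
    let w := revDualBasis v (S.infDualScale r l) hμ
    S.a • w p =
      if (p.1 : ℕ) = S.n - (S.n - l) - 1 then
        (if (p.2 : ℕ) = 0 then 0 else fe2 w (p.1 + 1) (p.2 - 1))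
      else fe2 w (p.1 + 1) p.2 := by
  intro w
  refine SMod.dual_ext v fun b => ?_
  have := p.1.isLt
  have := b.1.isLt
  rw [dualEquiv_a_smul (hb b), ha b, Nat.sub_sub_self hln.le]
  simp only [apply_ite (X.dualEquiv (w p)), apply_ite (fun φ => X.dualEquiv φ (v b)), map_zero,
    LinearMap.zero_apply, w, dualEquiv_revDualBasis_fe2, dualEquiv_fe2_revDualBasis]
  split_ifs <;>
    first
      | omega
      | ring1
      | linear_combination S.infDualScale_succ r l (b := b.1) (i := p.1) (j := p.2) (by omega)
          (by omega)
      | linear_combination S.infDualScale_break r l (b := b.1) (i := p.1) (j := p.2) hl hln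
          (by omega) (by omega) (by omega)

lemma d_smul_revDualBasis_inf (hl : 1 ≤ l) (hln : l < S.n)
    (hd : ∀ p : Fin S.n × Fin s, S.d • v p =
      if (p.1 : ℕ) = 0 then fe2 v (S.n - 1) p.2
      else if (p.1 : ℕ) ≤ S.n - l then S.alphaq p.1 (S.n - l) • fe2 v (p.1 - 1) p.2
      else S.alphaq (p.1 + l - S.n) l • fe2 v (p.1 - 1) p.2)
    (hc : ∀ p : Fin S.n × Fin s, S.c • v p = S.qpow ((p.1 : ℕ) + 1 - r) • v p)
    (p : Fin S.n × Fin s) :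
    let w := revDualBasis v (S.infDualScale r l) hμ
    S.d • w p =
      if (p.1 : ℕ) = 0 then fe2 w (S.n - 1) p.2
      else if (p.1 : ℕ) ≤ S.n - (S.n - l) then
        S.alphaq p.1 (S.n - (S.n - l)) • fe2 w (p.1 - 1) p.2
      else S.alphaq (p.1 + (S.n - l) - S.n) (S.n - l) • fe2 w (p.1 - 1) p.2 := by
  intro w
  refine SMod.dual_ext v fun b => ?_
  have := p.1.isLt
  have := b.1.isLt
  rw [dualEquiv_d_smul (hc b), hd b, Nat.sub_sub_self hln.le,
    show (p.1 : ℕ) + (S.n - l) - S.n = p.1 - l by omega]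
  simp only [apply_ite (X.dualEquiv (w p)), apply_ite (fun φ => X.dualEquiv φ (v b)),
    map_smul, LinearMap.smul_apply, smul_eq_mul, w, dualEquiv_revDualBasis_fe2,
    dualEquiv_fe2_revDualBasis]
  split_ifs <;>
    first
      | omega
      | ring1
      | linear_combination S.infDualScale_wrap r l (b := b.1) (i := p.1) (j := p.2) hl hln
          (by omega) (by omega)
      | linear_combination S.infDualScale_of_lt r l (b := b.1) (i := p.1) (j := p.2) (by omega)
          (by omega) (by omega)
      | linear_combination S.infDualScale_of_gt r l (b := b.1) (i := p.1) (j := p.2) (by omega)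
          (by omega)
      | (rw [show (b.1 : ℕ) = S.n - l by omega, show (p.1 : ℕ) = l by omega, alphaq_self,
          alphaq_self]; ring)

lemma isBandInf_dual (hl : 1 ≤ l) (hln : l < S.n) (hX : S.IsBandInf s l r X) :
    S.IsBandInf s (S.n - l) (1 - r) X.dual := by
  obtain ⟨v, ha, hd, hb, hc⟩ := hX
  exact ⟨revDualBasis v (S.infDualScale r l) (S.infDualScale_ne_zero r l),
    a_smul_revDualBasis_inf hl hln ha hb, d_smul_revDualBasis_inf hl hln hd hc,
    b_smul_revDualBasis hln.le hb, c_smul_revDualBasis hc⟩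

end BandInfDual

end TaftDouble

theorem statement9_general (k : Type) [Field k] (S : TaftDouble k)
    (l : ℕ) (r : ZMod S.n) (hl : 1 ≤ l) (hln : l < S.n)
    (η : WithTop k) (s : ℕ)
    (X : SMod S) (hX : S.IsBand s l r η X) :
    S.IsBand s (S.n - l) (1 - r) (pscale (-(S.q ^ l)) η) X.dual := by
  induction η using WithTop.recTopCoe with
  | top => exact isBandInf_dual hl hln hX
  | coe x => exact isBandFin_dual hln hX

/-- Lemma 3.13: `M_s(l,r,η)^* ≅ M_s(n-l, 1-r, -ηq^l)`. -/
theorem statement9 (k : Type) [Field k] [IsAlgClosed k] (S : TaftDouble k)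
    (l : ℕ) (r : ZMod S.n) (hl : 1 ≤ l) (hln : l < S.n)
    (η : WithTop k) (s : ℕ) (hs : 1 ≤ s)
    (X : SMod S) (hX : S.IsBand s l r η X) :
    S.IsBand s (S.n - l) (1 - r) (pscale (-(S.q ^ l)) η) X.dual :=
  statement9_general k S l r hl hln η s X hX
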